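/- Let c(x) = W₂ * tanh(W₁ x + b₁) + b₂ with c'(x) ≠ 0 at some point x. If c''(x)/c'(x) = 1/ε for some ε > 0, then 2|W₁| > 1/ε. -/

import Mathlib

/-!
Writing `u = W₁ x + b₁`, the chain rule and `tanh' = 1 - tanh²` give `c' = W₂ W₁ (1 - tanh² u)` and
`c'' = -2 W₁ tanh u · c'`. Wherever `c' ≠ 0` the logarithmic derivative `c''/c'` is therefore
`-2 W₁ tanh u`, whose absolute value is below `2 |W₁|` because `|tanh| < 1`.
-/

open Real

theorem Real.hasDerivAt_tanh (t : ℝ) : HasDerivAt tanh (1 - tanh t ^ 2) t := by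
  have hcosh := (cosh_pos t).ne'
  have hquot := (hasDerivAt_sinh t).fun_div (hasDerivAt_cosh t) hcosh
  rw [show tanh = fun y => sinh y / cosh y from funext tanh_eq_sinh_div_cosh]
  refine hquot.congr_deriv ?_
  field_simp

noncomputable def tanhNeuron (W₁ W₂ b₁ b₂ : ℝ) (y : ℝ) : ℝ :=
  W₂ * tanh (W₁ * y + b₁) + b₂

section tanhNeuron

variable (W₁ W₂ b₁ b₂ : ℝ)

theorem hasDerivAt_tanh_affine (y : ℝ) :
    HasDerivAt (fun z => tanh (W₁ * z + b₁)) (W₁ * (1 - tanh (W₁ * y + b₁) ^ 2)) y := by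
  have hinner : HasDerivAt (fun z => W₁ * z + b₁) W₁ y := by
    simpa using ((hasDerivAt_id y).const_mul W₁).add_const b₁
  exact ((hasDerivAt_tanh (W₁ * y + b₁)).comp y hinner).congr_deriv (mul_comm _ _)

theorem deriv_tanhNeuron :
    deriv (tanhNeuron W₁ W₂ b₁ b₂) = fun y => W₂ * (W₁ * (1 - tanh (W₁ * y + b₁) ^ 2)) :=
  funext fun y => (((hasDerivAt_tanh_affine W₁ b₁ y).const_mul W₂).add_const b₂).deriv

theorem hasDerivAt_deriv_tanhNeuron (y : ℝ) :
    HasDerivAt (deriv (tanhNeuron W₁ W₂ b₁ b₂))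
      (-2 * W₁ * tanh (W₁ * y + b₁) * deriv (tanhNeuron W₁ W₂ b₁ b₂) y) y := by
  have htanh := hasDerivAt_tanh_affine W₁ b₁ y
  rw [deriv_tanhNeuron]
  refine ((((hasDerivAt_const y 1).fun_sub (htanh.fun_pow 2)).const_mul W₁).const_mul W₂)
    |>.congr_deriv ?_
  push_cast
  ring

theorem logDeriv_deriv_tanhNeuron {y : ℝ} (hy : deriv (tanhNeuron W₁ W₂ b₁ b₂) y ≠ 0) :
    logDeriv (deriv (tanhNeuron W₁ W₂ b₁ b₂)) y = -2 * W₁ * tanh (W₁ * y + b₁) := by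
  rw [logDeriv_apply, (hasDerivAt_deriv_tanhNeuron W₁ W₂ b₁ b₂ y).deriv, mul_div_cancel_right₀ _ hy]

theorem abs_logDeriv_deriv_tanhNeuron_lt {y : ℝ} (hy : deriv (tanhNeuron W₁ W₂ b₁ b₂) y ≠ 0) :
    |logDeriv (deriv (tanhNeuron W₁ W₂ b₁ b₂)) y| < 2 * |W₁| := by
  have hW₁ : W₁ ≠ 0 := by
    rintro rfl
    simp [deriv_tanhNeuron] at hy
  rw [logDeriv_deriv_tanhNeuron W₁ W₂ b₁ b₂ hy, abs_mul, abs_mul, abs_neg, abs_two]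
  calc 2 * |W₁| * |tanh (W₁ * y + b₁)| < 2 * |W₁| * 1 := by
        gcongr
        exact abs_tanh_lt_one _
    _ = 2 * |W₁| := mul_one _

end tanhNeuron

theorem stmt_4_general (ε W₁ W₂ b₁ b₂ : ℝ)
    (c : ℝ → ℝ) (hc : ∀ x, c x = W₂ * Real.tanh (W₁ * x + b₁) + b₂) (x : ℝ)
    (hd : deriv c x ≠ 0)
    (hr : deriv (deriv c) x / deriv c x = 1 / ε) :
    2 * |W₁| > 1 / ε := by
  obtain rfl : c = tanhNeuron W₁ W₂ b₁ b₂ := funext hc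
  rw [← logDeriv_apply] at hr
  calc 1 / ε = logDeriv (deriv (tanhNeuron W₁ W₂ b₁ b₂)) x := hr.symm
    _ ≤ |logDeriv (deriv (tanhNeuron W₁ W₂ b₁ b₂)) x| := le_abs_self _
    _ < 2 * |W₁| := abs_logDeriv_deriv_tanhNeuron_lt W₁ W₂ b₁ b₂ hd

theorem stmt_4 (ε W₁ W₂ b₁ b₂ : ℝ) (hε : 0 < ε)
    (c : ℝ → ℝ) (hc : ∀ x, c x = W₂ * Real.tanh (W₁ * x + b₁) + b₂) (x : ℝ)
    (hd : deriv c x ≠ 0)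
    (hr : deriv (deriv c) x / deriv c x = 1 / ε) :
    2 * |W₁| > 1 / ε :=
  stmt_4_general ε W₁ W₂ b₁ b₂ c hc x hd hr
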